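/- Let M be a Λ-module such that S_M is a minimal infinite submodule-closed subcategory of mod Λ. Then M is not of finite type, i.e., M is not a direct sum of copies of finitely many finite-length modules. -/

import Mathlib

open Function

universe v

/-- `X` is cogenerated by `M`: `X` embeds into a finite direct power of `M`. -/
def Cogen (L : Type v) [Ring L] (M : Type v) [AddCommGroup M] [Module L M]
    (X : Type v) [AddCommGroup X] [Module L X] : Prop :=
  ∃ (r : ℕ) (f : X →ₗ[L] (Fin r → M)), Function.Injective f

/-- A module is indecomposable: nonzero, and every idempotent endomorphism is `0` or `id`. -/
def Indec (L : Type v) [Ring L] (X : Type v) [AddCommGroup X] [Module L X] : Prop :=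
  (¬ Subsingleton X) ∧ ∀ e : X →ₗ[L] X, e ∘ₗ e = e → e = 0 ∨ e = (LinearMap.id : X →ₗ[L] X)

/-- A (full, additive) subcategory of `mod Λ`, given by a predicate on finite-length modules,
closed under isomorphisms, finite direct sums and submodules (hence direct summands). -/
structure IsSubcat (L : Type v) [Ring L] (P : ModuleCat.{v} L → Prop) : Prop where
  finLength : ∀ X : ModuleCat.{v} L, P X → IsFiniteLength L X
  isoClosed : ∀ X Y : ModuleCat.{v} L, Nonempty (X ≃ₗ[L] Y) → P X → P Y
  sumClosed : ∀ X Y : ModuleCat.{v} L, P X → P Y → P (ModuleCat.of L (X × Y))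
  submodClosed : ∀ X : ModuleCat.{v} L, P X → ∀ N : Submodule L X, P (ModuleCat.of L N)

/-- The subcategory `P` contains infinitely many isomorphism classes of indecomposables. -/
def InfiniteSubcat (L : Type v) [Ring L] (P : ModuleCat.{v} L → Prop) : Prop :=
  ¬ ∃ (n : ℕ) (Y : Fin n → ModuleCat.{v} L),
      ∀ X : ModuleCat.{v} L, P X → Indec L X → ∃ i, Nonempty (X ≃ₗ[L] Y i)

/-- `P` is a minimal infinite submodule-closed subcategory. -/
def IsMinimalInf (L : Type v) [Ring L] (P : ModuleCat.{v} L → Prop) : Prop :=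
  IsSubcat L P ∧ InfiniteSubcat L P ∧
    ∀ Q : ModuleCat.{v} L → Prop, (∀ X, Q X → P X) → IsSubcat L Q → InfiniteSubcat L Q →
      Q = P

/-- The subcategory `S_M` of finite-length modules cogenerated by `M`. -/
def SMod (L : Type v) [Ring L] (M : Type v) [AddCommGroup M] [Module L M] :
    ModuleCat.{v} L → Prop :=
  fun X => IsFiniteLength L X ∧ Cogen L M X

/-- `M` is of finite type: a direct sum of (possibly infinitely many) copies of finitely
many finite-length modules. -/
def IsFiniteType (L : Type v) [Ring L] (M : Type v) [AddCommGroup M] [Module L M] : Prop :=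
  ∃ (ι : Type v) (N : ι → ModuleCat.{v} L), (∀ i, IsFiniteLength L (N i)) ∧
    (∃ (n : ℕ) (Y : Fin n → ModuleCat.{v} L), ∀ i, ∃ j, Nonempty ((N i : Type v) ≃ₗ[L] Y j)) ∧
    Nonempty (M ≃ₗ[L] DirectSum ι (fun i => N i))

/-!
If `M ≅ ⨁ Nᵢ` is of finite type, the finite product `Y` of the modules occurring among the `Nᵢ`
and `M` separate each other's points, so `S_M = S_Y` with `Y` of finite length. Let `Q` be the
subcategory cogenerated by the indecomposables of `S_Y` that are not direct summands of `Y`.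
If `Q` is infinite, minimality gives `Y ∈ Q`. But by Fitting's lemma every endomorphism
`Y → Z → Y` through such a `Z` lies in the Jacobson radical of `End Y`, which is nilpotent since
`End Y` is finite over the artinian base ring; so the nonzero elements of `Y` killed by the radical
survive no such map, a contradiction. If `Q` is finite, then so is `S_Y`: the remaining
indecomposables are summands of `Y`, and there are finitely many of those up to isomorphism.
-/

section Separation

variable {L : Type v} [Ring L] {W V X X' : Type v} [AddCommGroup W] [Module L W]
  [AddCommGroup V] [Module L V] [AddCommGroup X] [Module L X] [AddCommGroup X'] [Module L X']

/-- `X` embeds into a possibly infinite power of `W`. -/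
def SeparatedBy (L : Type v) [Ring L] (W X : Type v) [AddCommGroup W] [Module L W]
    [AddCommGroup X] [Module L X] : Prop :=
  ∀ x : X, x ≠ 0 → ∃ f : X →ₗ[L] W, f x ≠ 0

theorem separatedBy_self : SeparatedBy L X X := fun _ hx => ⟨LinearMap.id, hx⟩

theorem separatedBy_of_injective (f : X →ₗ[L] W) (hf : Injective f) : SeparatedBy L W X :=
  fun _ hx => ⟨f, (map_ne_zero_iff f hf).mpr hx⟩

theorem SeparatedBy.comp_injective (h : SeparatedBy L W X) (g : X' →ₗ[L] X) (hg : Injective g) :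
    SeparatedBy L W X' := fun x hx =>
  let ⟨f, hf⟩ := h (g x) ((map_ne_zero_iff g hg).mpr hx)
  ⟨f ∘ₗ g, hf⟩

theorem SeparatedBy.trans (hX : SeparatedBy L W X) (hW : SeparatedBy L V W) :
    SeparatedBy L V X := fun x hx =>
  let ⟨f, hf⟩ := hX x hx
  let ⟨g, hg⟩ := hW (f x) hf
  ⟨g ∘ₗ f, hg⟩

theorem SeparatedBy.nontrivial [Nontrivial X] (h : SeparatedBy L W X) : Nontrivial W :=
  let ⟨x, hx⟩ := exists_ne (0 : X)
  let ⟨f, hf⟩ := h x hx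
  ⟨⟨f x, 0, hf⟩⟩

theorem separatedBy_pi {η : Type} (Z : η → Type v) [∀ i, AddCommGroup (Z i)]
    [∀ i, Module L (Z i)] (h : ∀ i, SeparatedBy L W (Z i)) : SeparatedBy L W (∀ i, Z i) :=
  fun z hz =>
  let ⟨i, hi⟩ := Function.ne_iff.mp hz
  let ⟨f, hf⟩ := h i (z i) hi
  ⟨f ∘ₗ LinearMap.proj i, hf⟩

theorem separatedBy_directSum {ι : Type v} (Z : ι → Type v) [∀ i, AddCommGroup (Z i)]
    [∀ i, Module L (Z i)] (h : ∀ i, SeparatedBy L W (Z i)) :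
    SeparatedBy L W (DirectSum ι Z) := fun z hz => by
  classical
  obtain ⟨i, hi⟩ := DFinsupp.ne_iff.mp hz
  obtain ⟨f, hf⟩ := h i (z i) hi
  exact ⟨f ∘ₗ DirectSum.component L ι Z i, hf⟩

theorem Cogen.separatedBy (h : Cogen L W X) : SeparatedBy L W X := fun _ hx =>
  let ⟨_, f, hf⟩ := h
  let ⟨a, ha⟩ := Function.ne_iff.mp ((map_ne_zero_iff f hf).mpr hx)
  ⟨LinearMap.proj a ∘ₗ f, ha⟩

theorem cogen_of_injective_pi {η : Type*} [Finite η] (f : X →ₗ[L] (η → W)) (hf : Injective f) :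
    Cogen L W X :=
  let e := (Finite.equivFin η).symm
  ⟨Nat.card η, (LinearEquiv.funCongrLeft L W e).toLinearMap ∘ₗ f,
    (LinearEquiv.funCongrLeft L W e).injective.comp hf⟩

/-- Artinianity lets finitely many of the maps `X → W` already separate the points. -/
theorem SeparatedBy.cogen [IsArtinian L X] (h : SeparatedBy L W X) : Cogen L W X := by
  obtain ⟨t, ht⟩ := Finset.exists_inf_le (fun f : X →ₗ[L] W => LinearMap.ker f)
  refine cogen_of_injective_pi (LinearMap.pi fun f : t => f.1) ?_
  rw [← LinearMap.ker_eq_bot, Submodule.eq_bot_iff]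
  intro x hx
  by_contra hx0
  obtain ⟨f, hf⟩ := h x hx0
  refine hf (ht f ?_)
  exact Submodule.mem_finsetInf.mpr fun g hg => congr_fun hx ⟨g, hg⟩

theorem cogen_iff_separatedBy [IsArtinian L X] : Cogen L W X ↔ SeparatedBy L W X :=
  ⟨Cogen.separatedBy, SeparatedBy.cogen⟩

end Separation

section FinitelyManyIndec

variable {L : Type v} [Ring L]

def FinitelyManyIndec (L : Type v) [Ring L] (P : ModuleCat.{v} L → Prop) : Prop :=
  ∃ (n : ℕ) (Y : Fin n → ModuleCat.{v} L),
    ∀ X : ModuleCat.{v} L, P X → Indec L X → ∃ i, Nonempty (X ≃ₗ[L] Y i)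

theorem FinitelyManyIndec.mono {P Q : ModuleCat.{v} L → Prop}
    (hPQ : ∀ X, P X → Indec L X → Q X) (hQ : FinitelyManyIndec L Q) : FinitelyManyIndec L P :=
  let ⟨n, Y, hY⟩ := hQ
  ⟨n, Y, fun X hX hind => hY X (hPQ X hX hind) hind⟩

theorem FinitelyManyIndec.or {P Q : ModuleCat.{v} L → Prop} (hP : FinitelyManyIndec L P)
    (hQ : FinitelyManyIndec L Q) : FinitelyManyIndec L (fun X => P X ∨ Q X) := by
  obtain ⟨m, Y, hY⟩ := hP
  obtain ⟨n, Z, hZ⟩ := hQ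
  refine ⟨m + n, Fin.append Y Z, fun X hX hind => ?_⟩
  rcases hX with hX | hX
  · obtain ⟨i, hi⟩ := hY X hX hind
    exact ⟨Fin.castAdd n i, by rwa [Fin.append_left]⟩
  · obtain ⟨i, hi⟩ := hZ X hX hind
    exact ⟨Fin.natAdd m i, by rwa [Fin.append_right]⟩

theorem InfiniteSubcat.exists_indec {P : ModuleCat.{v} L → Prop} (h : InfiniteSubcat L P) :
    ∃ X, P X ∧ Indec L X := by
  by_contra! hP
  exact h ⟨0, Fin.elim0, fun X hX hind => absurd hind (hP X hX)⟩

end FinitelyManyIndec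

section Fitting

variable {L : Type v} [Ring L] {X : Type v} [AddCommGroup X] [Module L X]

theorem Indec.eq_bot_or_eq_bot_of_isCompl (hX : Indec L X) {p q : Submodule L X}
    (hpq : IsCompl p q) : p = ⊥ ∨ q = ⊥ := by
  rcases hX.2 (p.projection q hpq) (Submodule.isIdempotentElem_projection hpq) with h | h
  · left
    rw [← Submodule.range_projection hpq, h, LinearMap.range_zero]
  · right
    rw [← Submodule.ker_projection hpq, h, LinearMap.ker_id]

theorem Indec.isNilpotent_or_isUnit [IsNoetherian L X] [IsArtinian L X] (hX : Indec L X)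
    (u : Module.End L X) : IsNilpotent u ∨ IsUnit u := by
  obtain ⟨n, hn⟩ := Filter.eventually_atTop.mp u.eventually_isCompl_ker_pow_range_pow
  rcases hX.eq_bot_or_eq_bot_of_isCompl (hn (n + 1) n.le_succ) with h | h
  · right
    have hinj : Injective u := by
      rw [← LinearMap.ker_eq_bot, eq_bot_iff, ← h]
      intro x hx
      rw [LinearMap.mem_ker] at hx ⊢
      rw [pow_succ, Module.End.mul_apply, hx, map_zero]
    exact (Module.End.isUnit_iff u).mpr (IsArtinian.bijective_of_injective_endomorphism u hinj)
  · left
    exact ⟨n + 1, LinearMap.range_eq_bot.mp h⟩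

theorem Indec.isLocalRing [IsNoetherian L X] [IsArtinian L X] (hX : Indec L X) :
    IsLocalRing (Module.End L X) :=
  have : Nontrivial X := not_subsingleton_iff_nontrivial.mp hX.1
  .of_isUnit_or_isUnit_one_sub_self fun u =>
    (hX.isNilpotent_or_isUnit u).symm.imp_right IsNilpotent.isUnit_one_sub

end Fitting

section Retract

variable {L : Type v} [Ring L] {X W V A B : Type v} [AddCommGroup X] [Module L X]
  [AddCommGroup W] [Module L W] [AddCommGroup V] [Module L V]
  [AddCommGroup A] [Module L A] [AddCommGroup B] [Module L B]

/-- `X` is (isomorphic to) a direct summand of `W`. -/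
def IsRetract (L : Type v) [Ring L] (X W : Type v) [AddCommGroup X] [Module L X]
    [AddCommGroup W] [Module L W] : Prop :=
  ∃ (α : X →ₗ[L] W) (σ : W →ₗ[L] X), σ ∘ₗ α = LinearMap.id

theorem IsRetract.of_isUnit (α : X →ₗ[L] W) (σ : W →ₗ[L] X)
    (h : IsUnit (σ ∘ₗ α : Module.End L X)) : IsRetract L X W := by
  obtain ⟨u, hu⟩ := h
  refine ⟨α, (u⁻¹ : (Module.End L X)ˣ).val ∘ₗ σ, ?_⟩
  rw [LinearMap.comp_assoc, ← hu]
  exact u.inv_mul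

theorem LinearEquiv.isRetract (e : X ≃ₗ[L] W) : IsRetract L X W :=
  ⟨e, e.symm, e.symm_comp⟩

theorem IsRetract.trans (hXW : IsRetract L X W) (hWV : IsRetract L W V) : IsRetract L X V := by
  obtain ⟨α, σ, h⟩ := hXW
  obtain ⟨α', σ', h'⟩ := hWV
  refine ⟨α' ∘ₗ α, σ ∘ₗ σ', ?_⟩
  rw [LinearMap.comp_assoc, ← LinearMap.comp_assoc α α' σ', h', LinearMap.id_comp, h]

theorem IsRetract.exists_injective (h : IsRetract L X W) : ∃ α : X →ₗ[L] W, Injective α :=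
  let ⟨α, σ, hσα⟩ := h
  ⟨α, Function.LeftInverse.injective (g := σ) (LinearMap.congr_fun hσα)⟩

theorem IsRetract.or_of_prod [IsLocalRing (Module.End L X)] (h : IsRetract L X (A × B)) :
    IsRetract L X A ∨ IsRetract L X B := by
  obtain ⟨α, σ, hσα⟩ := h
  have hsum : σ ∘ₗ LinearMap.inl L A B ∘ₗ LinearMap.fst L A B ∘ₗ α +
      σ ∘ₗ LinearMap.inr L A B ∘ₗ LinearMap.snd L A B ∘ₗ α = 1 := by
    rw [Module.End.one_eq_id, ← hσα]; ext x; simp [← map_add]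
  exact (IsLocalRing.isUnit_or_isUnit_of_add_one hsum).imp
    (.of_isUnit (LinearMap.fst L A B ∘ₗ α) (σ ∘ₗ LinearMap.inl L A B))
    (.of_isUnit (LinearMap.snd L A B ∘ₗ α) (σ ∘ₗ LinearMap.inr L A B))

/-- `α ∘ σ` is an idempotent of the indecomposable `W`, nonzero because `X ≠ 0`. -/
theorem Indec.nonempty_linearEquiv_of_isRetract (hW : Indec L W) (hX : ¬ Subsingleton X)
    (h : IsRetract L X W) : Nonempty (X ≃ₗ[L] W) := by
  obtain ⟨α, σ, hσα⟩ := h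
  have hinj : Injective α := Function.LeftInverse.injective (g := σ) (LinearMap.congr_fun hσα)
  have hidem : (α ∘ₗ σ) ∘ₗ (α ∘ₗ σ) = α ∘ₗ σ :=
    LinearMap.ext fun x => congr_arg α (LinearMap.congr_fun hσα (σ x))
  rcases hW.2 _ hidem with h0 | h1
  · have hα : α = 0 := by
      rw [← LinearMap.comp_id α, ← hσα, ← LinearMap.comp_assoc, h0, LinearMap.zero_comp]
    exact absurd ⟨fun x y => hinj (by simp [hα])⟩ hX
  · exact ⟨.ofLinearMap α σ h1 hσα⟩

theorem exists_isCompl_ne_top_of_not_indec {N : Type v} [AddCommGroup N] [Module L N]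
    (hN : ¬ Subsingleton N) (hind : ¬ Indec L N) :
    ∃ p q : Submodule L N, IsCompl p q ∧ p ≠ ⊤ ∧ q ≠ ⊤ := by
  simp only [Indec, hN, not_false_eq_true, true_and, not_forall, not_or] at hind
  obtain ⟨e, he, he0, he1⟩ := hind
  have hidem : IsIdempotentElem e := he
  refine ⟨LinearMap.range e, LinearMap.ker e, LinearMap.IsIdempotentElem.isCompl hidem, ?_, ?_⟩
  · exact fun htop => he1 (LinearMap.ext fun x => by
      obtain ⟨y, rfl⟩ := LinearMap.range_eq_top.mp htop x
      exact LinearMap.congr_fun he y)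
  · exact fun htop => he0 (LinearMap.ker_eq_top.mp htop)

/-- Split off idempotents until the summands are indecomposable; the length drops at each split,
and an indecomposable retract of `p × q` is a retract of `p` or of `q`. -/
theorem finitelyManyIndec_isRetract (N : Type v) [AddCommGroup N] [Module L N]
    [IsNoetherian L N] [IsArtinian L N] :
    FinitelyManyIndec L (fun X => IsRetract L X N) := by
  suffices ∀ n : ℕ∞, ∀ (N : Type v) [AddCommGroup N] [Module L N] [IsNoetherian L N]
      [IsArtinian L N], Module.length L N = n → FinitelyManyIndec L (fun X => IsRetract L X N) from
    this _ N rfl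
  intro n
  induction n using WellFoundedLT.induction with | _ n ih => ?_
  intro N _ _ _ _ hn
  by_cases hs : Subsingleton N
  · refine ⟨0, Fin.elim0, fun X hX hXind => (hXind.1 ?_).elim⟩
    obtain ⟨α, hα⟩ := hX.exists_injective
    exact hα.subsingleton
  by_cases hind : Indec L N
  · exact ⟨1, fun _ => ModuleCat.of L N,
      fun X hX hXind => ⟨0, hind.nonempty_linearEquiv_of_isRetract hXind.1 hX⟩⟩
  obtain ⟨p, q, hpq, hp, hq⟩ := exists_isCompl_ne_top_of_not_indec hs hind
  refine ((ih _ (hn ▸ Submodule.length_lt hp) p rfl).or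
    (ih _ (hn ▸ Submodule.length_lt hq) q rfl)).mono fun X hX hXind => ?_
  obtain ⟨α, hα⟩ := hX.exists_injective
  have := isNoetherian_of_injective α hα
  have := isArtinian_of_injective α hα
  have := hXind.isLocalRing
  exact (hX.trans (Submodule.prodEquivOfIsCompl p q hpq).symm.isRetract).or_of_prod

end Retract

section Jacobson

theorem IsArtinianRing.exists_ne_zero_forall_jacobson_mul_eq_zero {R : Type*} [Ring R]
    [IsArtinianRing R] [Nontrivial R] :
    ∃ φ : R, φ ≠ 0 ∧ ∀ c ∈ (⊥ : Ideal R).jacobson, c * φ = 0 := by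
  classical
  set J := (⊥ : Ideal R).jacobson
  have hJ : ∃ n, J ^ n = ⊥ := IsArtinianRing.isNilpotent_jacobson_bot
  have hpos : Nat.find hJ ≠ 0 := fun h => by
    have h0 := Nat.find_spec hJ
    rw [h, Submodule.pow_zero, Ideal.one_eq_top] at h0
    exact top_ne_bot h0
  obtain ⟨k, hk⟩ := Nat.exists_eq_add_one_of_ne_zero hpos
  obtain ⟨φ, hφ, hφ0⟩ := Submodule.exists_mem_ne_zero_of_ne_bot
    (Nat.find_min hJ (m := k) (by omega))
  refine ⟨φ, hφ0, fun c hc => ?_⟩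
  have hmem := Ideal.mul_mem_mul hc hφ
  rwa [← Ideal.IsTwoSided.pow_succ, ← hk, Nat.find_spec hJ] at hmem

theorem Ideal.mem_jacobson_bot_of_forall_isNilpotent_mul {R : Type*} [Ring R] {x : R}
    (h : ∀ y, IsNilpotent (y * x)) : x ∈ (⊥ : Ideal R).jacobson :=
  Ideal.mem_jacobson_iff.mpr fun y => ⟨↑(h y).isUnit_add_one.unit⁻¹, by
    rw [Ideal.mem_bot, mul_assoc, ← mul_add_one, IsUnit.val_inv_mul, sub_self]⟩

theorem isArtinianRing_end (k : Type*) {L : Type v} [CommRing k] [IsArtinianRing k] [Ring L]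
    [Algebra k L] [Module.Finite k L] (Y : Type v) [AddCommGroup Y] [Module L Y]
    [Module.Finite L Y] : IsArtinianRing (Module.End L Y) := by
  let _ : Module k Y := Module.compHom Y (algebraMap k L)
  have : IsScalarTower k L Y := IsScalarTower.of_algebraMap_smul fun _ _ => rfl
  have : Module.Finite k Y := Module.Finite.trans L Y
  obtain ⟨s, hs⟩ := Module.Finite.fg_top (R := L) (M := Y)
  let restrict : Module.End L Y →ₗ[k] (s → Y) :=
    { toFun := fun φ x => φ x
      map_add' := fun _ _ => rfl
      map_smul' := fun _ _ => rfl }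
  have hinj : Injective restrict := fun φ ψ h =>
    LinearMap.ext_on hs fun x hx => congr_fun h ⟨x, hx⟩
  exact isArtinian_of_tower k (isArtinian_of_injective restrict hinj)

variable {L : Type v} [Ring L] {X Y : Type v} [AddCommGroup X] [Module L X]
  [AddCommGroup Y] [Module L Y]

theorem LinearMap.isNilpotent_comp_swap {a : Y →ₗ[L] X} {b : X →ₗ[L] Y}
    (h : IsNilpotent (a ∘ₗ b)) : IsNilpotent (b ∘ₗ a) := by
  obtain ⟨n, hn⟩ := h
  refine ⟨n + 1, LinearMap.ext fun y => ?_⟩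
  have hsc : Function.Semiconj b (a ∘ₗ b) (b ∘ₗ a) := fun _ => rfl
  rw [Module.End.pow_apply, Function.iterate_succ_apply, LinearMap.comp_apply,
    ← (hsc.iterate_right n) (a y), ← Module.End.pow_apply, hn]
  simp

theorem exists_ne_zero_forall_jacobson_apply_eq_zero [IsArtinianRing (Module.End L Y)]
    [Nontrivial Y] : ∃ y : Y, y ≠ 0 ∧ ∀ c ∈ (⊥ : Ideal (Module.End L Y)).jacobson, c y = 0 := by
  obtain ⟨φ, hφ0, hφ⟩ :=
    IsArtinianRing.exists_ne_zero_forall_jacobson_mul_eq_zero (R := Module.End L Y)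
  obtain ⟨y, hy⟩ : ∃ y, φ y ≠ 0 := by
    by_contra! h
    exact hφ0 (LinearMap.ext h)
  exact ⟨φ y, hy, fun c hc => LinearMap.congr_fun (hφ c hc) y⟩

/-- If `g ∘ ψ ∘ h` were invertible for some `ψ`, `X` would be a retract of `Y`; so by Fitting it is
nilpotent for every `ψ`, and hence so is `ψ ∘ h ∘ g`. -/
theorem comp_mem_jacobson_of_not_isRetract [IsNoetherian L X] [IsArtinian L X] (hX : Indec L X)
    (hXY : ¬ IsRetract L X Y) (g : Y →ₗ[L] X) (h : X →ₗ[L] Y) :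
    h ∘ₗ g ∈ (⊥ : Ideal (Module.End L Y)).jacobson := by
  refine Ideal.mem_jacobson_bot_of_forall_isNilpotent_mul fun ψ => ?_
  have hnil : IsNilpotent (g ∘ₗ ψ ∘ₗ h : Module.End L X) :=
    (hX.isNilpotent_or_isUnit _).resolve_right fun hu => hXY (.of_isUnit (ψ ∘ₗ h) g hu)
  exact LinearMap.isNilpotent_comp_swap (b := ψ ∘ₗ h) hnil

end Jacobson

section CogenSubcat

variable {L : Type v} [Ring L]

def CogenSubcat (L : Type v) [Ring L] (C : ModuleCat.{v} L → Prop) : ModuleCat.{v} L → Prop :=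
  fun X => IsFiniteLength L X ∧ ∀ x : X, x ≠ 0 → ∃ Z, C Z ∧ ∃ f : X →ₗ[L] Z, f x ≠ 0

theorem CogenSubcat.of_injective {C : ModuleCat.{v} L → Prop} {X X' : ModuleCat.{v} L}
    (hX : CogenSubcat L C X) (g : X' →ₗ[L] X) (hg : Injective g) : CogenSubcat L C X' :=
  ⟨hX.1.of_injective hg, fun x hx =>
    let ⟨Z, hZ, f, hf⟩ := hX.2 (g x) ((map_ne_zero_iff g hg).mpr hx)
    ⟨Z, hZ, f ∘ₗ g, hf⟩⟩

theorem CogenSubcat.prod {C : ModuleCat.{v} L → Prop} {X X' : ModuleCat.{v} L}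
    (hX : CogenSubcat L C X) (hX' : CogenSubcat L C X') :
    CogenSubcat L C (ModuleCat.of L (X × X')) := by
  refine ⟨?_, fun x hx => ?_⟩
  · obtain ⟨_, _⟩ := isFiniteLength_iff_isNoetherian_isArtinian.mp hX.1
    obtain ⟨_, _⟩ := isFiniteLength_iff_isNoetherian_isArtinian.mp hX'.1
    exact isFiniteLength_iff_isNoetherian_isArtinian.mpr ⟨inferInstance, inferInstance⟩
  by_cases h1 : x.1 = 0
  · obtain ⟨Z, hZ, f, hf⟩ := hX'.2 x.2 fun h2 => hx (Prod.ext h1 h2)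
    exact ⟨Z, hZ, f ∘ₗ LinearMap.snd L X X', hf⟩
  · obtain ⟨Z, hZ, f, hf⟩ := hX.2 x.1 h1
    exact ⟨Z, hZ, f ∘ₗ LinearMap.fst L X X', hf⟩

theorem CogenSubcat.separatedBy {C : ModuleCat.{v} L → Prop} {X : ModuleCat.{v} L}
    {Y : Type v} [AddCommGroup Y] [Module L Y] (hC : ∀ Z, C Z → SeparatedBy L Y Z)
    (hX : CogenSubcat L C X) : SeparatedBy L Y X := fun x hx =>
  let ⟨Z, hZ, f, hf⟩ := hX.2 x hx
  let ⟨g, hg⟩ := hC Z hZ (f x) hf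
  ⟨g ∘ₗ f, hg⟩

theorem isSubcat_cogenSubcat (C : ModuleCat.{v} L → Prop) : IsSubcat L (CogenSubcat L C) where
  finLength _ hX := hX.1
  isoClosed _ _ e hX := hX.of_injective e.some.symm.toLinearMap e.some.symm.injective
  sumClosed _ _ hX hX' := hX.prod hX'
  submodClosed _ hX N := hX.of_injective N.subtype N.injective_subtype

end CogenSubcat

theorem IsFiniteType.exists_separatedBy {L : Type v} [Ring L] {M : Type v} [AddCommGroup M]
    [Module L M] (hM : IsFiniteType L M) :
    ∃ Y : ModuleCat.{v} L, IsFiniteLength L Y ∧ SeparatedBy L Y M ∧ SeparatedBy L M Y := by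
  classical
  obtain ⟨ι, N, hNfl, ⟨n, Z, hZ⟩, ⟨eM⟩⟩ := hM
  let κ := {j : Fin n // ∃ i, Nonempty (N i ≃ₗ[L] Z j)}
  refine ⟨ModuleCat.of L (∀ j : κ, Z j.1), ?_, ?_, ?_⟩
  · have hfl (j : κ) : IsNoetherian L (Z j.1) ∧ IsArtinian L (Z j.1) :=
      isFiniteLength_iff_isNoetherian_isArtinian.mp
        (j.2.choose_spec.some.isFiniteLength (hNfl j.2.choose))
    have := fun j => (hfl j).1
    have := fun j => (hfl j).2
    exact isFiniteLength_iff_isNoetherian_isArtinian.mpr ⟨inferInstance, inferInstance⟩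
  · refine (separatedBy_directSum _ fun i => ?_).comp_injective eM.toLinearMap eM.injective
    obtain ⟨j, ⟨e⟩⟩ := hZ i
    exact separatedBy_of_injective
      (LinearMap.single L (fun j : κ => Z j.1) ⟨j, i, ⟨e⟩⟩ ∘ₗ e.toLinearMap)
      ((Pi.single_injective _).comp e.injective)
  · refine separatedBy_pi _ fun j => ?_
    obtain ⟨i, ⟨e⟩⟩ := j.2
    exact separatedBy_of_injective
      (eM.symm.toLinearMap ∘ₗ DirectSum.lof L ι (fun i => N i) i ∘ₗ e.symm.toLinearMap)
      (eM.symm.injective.comp ((DirectSum.of_injective i).comp e.symm.injective))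

theorem sMod_eq_of_separatedBy {L : Type v} [Ring L] {M Y : Type v} [AddCommGroup M] [Module L M]
    [AddCommGroup Y] [Module L Y] (hYM : SeparatedBy L Y M) (hMY : SeparatedBy L M Y) :
    SMod L M = fun X : ModuleCat.{v} L => IsFiniteLength L X ∧ SeparatedBy L Y X := by
  funext X
  refine propext (and_congr_right fun hX => ?_)
  have := (isFiniteLength_iff_isNoetherian_isArtinian.mp hX).2
  rw [cogen_iff_separatedBy]
  exact ⟨fun h => h.trans hYM, fun h => h.trans hMY⟩

theorem not_isMinimalInf_of_isFiniteLength (k : Type*) [CommRing k] [IsArtinianRing k]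
    {L : Type v} [Ring L] [Algebra k L] [Module.Finite k L] (Y : ModuleCat.{v} L)
    (hY : IsFiniteLength L Y) :
    ¬ IsMinimalInf L (fun X => IsFiniteLength L X ∧ SeparatedBy L Y X) := by
  rintro ⟨-, hinf, hmin⟩
  obtain ⟨_, _⟩ := isFiniteLength_iff_isNoetherian_isArtinian.mp hY
  let C : ModuleCat.{v} L → Prop := fun Z =>
    (IsFiniteLength L Z ∧ SeparatedBy L Y Z) ∧ Indec L Z ∧ ¬ IsRetract L Z Y
  have hQS (X : ModuleCat.{v} L) (hX : CogenSubcat L C X) :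
      IsFiniteLength L X ∧ SeparatedBy L Y X :=
    ⟨hX.1, hX.separatedBy fun _ hZ => hZ.1.2⟩
  by_cases hQinf : InfiniteSubcat L (CogenSubcat L C)
  · have hYQ : CogenSubcat L C Y := by
      rw [hmin _ hQS (isSubcat_cogenSubcat C) hQinf]
      exact ⟨hY, separatedBy_self⟩
    obtain ⟨X, hX, hXind⟩ := hinf.exists_indec
    have := not_subsingleton_iff_nontrivial.mp hXind.1
    have := hX.2.nontrivial
    have := isArtinianRing_end k (L := L) Y
    obtain ⟨y, hy0, hy⟩ := exists_ne_zero_forall_jacobson_apply_eq_zero (L := L) (Y := Y)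
    obtain ⟨Z, ⟨⟨hZfl, hZY⟩, hZind, hZr⟩, g, hg⟩ := hYQ.2 y hy0
    obtain ⟨h, hh⟩ := hZY (g y) hg
    obtain ⟨_, _⟩ := isFiniteLength_iff_isNoetherian_isArtinian.mp hZfl
    exact hh (hy _ (comp_mem_jacobson_of_not_isRetract hZind hZr g h))
  · refine hinf (((finitelyManyIndec_isRetract Y).or (not_not.mp hQinf)).mono fun X hX hind => ?_)
    by_cases hr : IsRetract L X Y
    · exact .inl hr
    · exact .inr ⟨hX.1, fun x hx => ⟨X, ⟨hX, hind, hr⟩, LinearMap.id, hx⟩⟩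

/-- if `S_M` is minimal infinite submodule-closed, then `M` is not of
finite type. -/
theorem minimal_not_finiteType
    (k : Type v) [CommRing k] [IsArtinianRing k]
    (L : Type v) [Ring L] [Algebra k L] [Module.Finite k L]
    (M : Type v) [AddCommGroup M] [Module L M]
    (hmin : IsMinimalInf L (SMod L M)) :
    ¬ IsFiniteType L M := by
  intro hM
  obtain ⟨Y, hYfl, hYM, hMY⟩ := hM.exists_separatedBy
  rw [sMod_eq_of_separatedBy hYM hMY] at hmin
  exact not_isMinimalInf_of_isFiniteLength k Y hYfl hmin
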